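/- arXiv:math/0609178 — 3 statements merged into one kernel-verified Lean document; each statement's English description precedes it below -/
import Mathlib

section
/- For natural numbers m ≥ 1 and ℓ: C(m + mℓ − 1, mℓ) = 1 + ∑_{i=1}^{⌊mℓ/(ℓ+1)⌋} (−1)^{i+1} · C(m, i) · C(m + mℓ − i(ℓ+1) − 1, mℓ − i(ℓ+1)), as an identity in ℤ. -/
/-!
Both sides are read off the coefficient of `X^(mℓ)` in `(1 + X + ⋯ + X^ℓ)^m`, the generating
function of compositions of `n` into `m` parts of size at most `ℓ`. Writing it as
`(1 - X^(ℓ+1))^m · (1 - X)^(-m)` and expanding the first factor by the binomial theorem gives the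
inclusion–exclusion sum of multiset numbers, while `mℓ` is the degree of this monic polynomial,
so the coefficient is `1`.
-/

open Finset PowerSeries

namespace PowerSeries

theorem coeff_invOneSubPow {R : Type*} [CommRing R] (m d : ℕ) :
    coeff d (invOneSubPow R m).val = (m.multichoose d : R) := by
  rcases Nat.eq_zero_or_pos m with rfl | hm
  · rcases d with _ | d <;> simp [invOneSubPow_zero, coeff_one]
  · rw [invOneSubPow_val_eq_mk_sub_one_add_choose_of_pos _ _ hm, coeff_mk, Nat.multichoose_eq,
      show m + d - 1 = m - 1 + d by omega, Nat.choose_symm_add]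

theorem geom_sum_X_pow_eq {R : Type*} [CommRing R] (ℓ m : ℕ) :
    (∑ j ∈ range (ℓ + 1), (X : R⟦X⟧) ^ j) ^ m
      = (1 - X ^ (ℓ + 1)) ^ m * (invOneSubPow R m).val := by
  rw [← mul_neg_geom_sum, mul_pow, mul_comm ((1 - X) ^ m), mul_assoc,
    ← invOneSubPow_inv_eq_one_sub_pow, Units.inv_val, mul_one]

theorem coeff_geom_sum_X_pow {R : Type*} [CommRing R] (ℓ m n : ℕ) :
    coeff n ((∑ j ∈ range (ℓ + 1), (X : R⟦X⟧) ^ j) ^ m)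
      = ∑ i ∈ (range (m + 1)).filter (fun i ↦ i * (ℓ + 1) ≤ n),
          (-1) ^ i * (m.choose i : R) * (m.multichoose (n - i * (ℓ + 1)) : R) := by
  rw [geom_sum_X_pow_eq, sub_eq_neg_add, add_pow, sum_mul, map_sum, sum_filter]
  refine sum_congr rfl fun i _ ↦ ?_
  have hterm : (-X ^ (ℓ + 1)) ^ i * 1 ^ (m - i) * (m.choose i : R⟦X⟧) * (invOneSubPow R m).val
      = C ((-1) ^ i * (m.choose i : R)) * (X ^ (i * (ℓ + 1)) * (invOneSubPow R m).val) := by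
    rw [neg_pow, ← pow_mul, map_mul, map_pow, map_neg, map_one, map_natCast]
    ring
  rw [hterm, coeff_C_mul, coeff_X_pow_mul', coeff_invOneSubPow, mul_ite, mul_zero]

theorem coeff_top_geom_sum_X_pow {R : Type*} [CommSemiring R] (ℓ m : ℕ) :
    coeff (m * ℓ) ((∑ j ∈ range (ℓ + 1), (X : R⟦X⟧) ^ j) ^ m) = 1 := by
  set p : Polynomial R := ∑ j ∈ range (ℓ + 1), Polynomial.X ^ j
  have hp : (p : R⟦X⟧) = ∑ j ∈ range (ℓ + 1), X ^ j := by
    rw [← Polynomial.coeToPowerSeries.ringHom_apply, map_sum]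
    simp
  have hdeg : p.natDegree ≤ ℓ :=
    Polynomial.natDegree_sum_le_of_forall_le _ _ fun j hj ↦
      (Polynomial.natDegree_X_pow_le j).trans (Nat.lt_succ_iff.mp (mem_range.mp hj))
  rw [← hp, ← Polynomial.coe_pow, Polynomial.coeff_coe,
    Polynomial.coeff_pow_of_natDegree_le hdeg]
  simp [p, Polynomial.finsetSum_coeff, Polynomial.coeff_X_pow]

end PowerSeries

theorem Nat.sum_range_neg_one_pow_mul_choose_mul_multichoose (m ℓ : ℕ) :
    ∑ i ∈ range (m * ℓ / (ℓ + 1) + 1),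
      (-1) ^ i * (m.choose i : ℤ) * (m.multichoose (m * ℓ - i * (ℓ + 1)) : ℤ) = 1 := by
  have hrange : (range (m + 1)).filter (fun i ↦ i * (ℓ + 1) ≤ m * ℓ)
      = range (m * ℓ / (ℓ + 1) + 1) := by
    ext i
    simp only [mem_filter, mem_range, Nat.lt_succ_iff, Nat.le_div_iff_mul_le (Nat.succ_pos ℓ)]
    exact ⟨And.right, fun h ↦ ⟨by nlinarith, h⟩⟩
  rw [← hrange, ← coeff_geom_sum_X_pow]
  exact coeff_top_geom_sum_X_pow ℓ m

theorem stmt_7_general (m ℓ : ℕ) :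
    (((m + m * ℓ - 1).choose (m * ℓ) : ℤ))
      = 1 + ∑ i ∈ Finset.Icc 1 (m * ℓ / (ℓ + 1)),
          (-1) ^ (i + 1) * (m.choose i : ℤ)
            * ((m + m * ℓ - i * (ℓ + 1) - 1).choose (m * ℓ - i * (ℓ + 1)) : ℤ) := by
  set q := m * ℓ / (ℓ + 1)
  have key := Nat.sum_range_neg_one_pow_mul_choose_mul_multichoose m ℓ
  rw [range_eq_Ico, sum_eq_sum_Ico_succ_bot (Nat.succ_pos q), zero_add, Nat.succ_eq_add_one,
    Ico_add_one_right_eq_Icc] at key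
  simp only [pow_zero, Nat.choose_zero_right, zero_mul, Nat.sub_zero, Nat.cast_one, one_mul] at key
  have hsum : ∑ i ∈ Icc 1 q, (-1) ^ (i + 1) * (m.choose i : ℤ)
        * ((m + m * ℓ - i * (ℓ + 1) - 1).choose (m * ℓ - i * (ℓ + 1)) : ℤ)
      = -∑ i ∈ Icc 1 q,
          (-1) ^ i * (m.choose i : ℤ) * (m.multichoose (m * ℓ - i * (ℓ + 1)) : ℤ) := by
    rw [← sum_neg_distrib]
    refine sum_congr rfl fun i hi ↦ ?_
    have hi : i * (ℓ + 1) ≤ m * ℓ :=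
      (Nat.le_div_iff_mul_le (Nat.succ_pos ℓ)).mp (mem_Icc.mp hi).2
    rw [Nat.multichoose_eq,
      show m + (m * ℓ - i * (ℓ + 1)) - 1 = m + m * ℓ - i * (ℓ + 1) - 1 by omega]
    ring
  rw [hsum, ← Nat.multichoose_eq]
  linarith

/-- Expansion of `C(m+mℓ-1, mℓ)` from the inclusion–exclusion formula at `n = mℓ`. -/
theorem stmt_7 (m ℓ : ℕ) (hm : 1 ≤ m) :
    (((m + m * ℓ - 1).choose (m * ℓ) : ℤ))
      = 1 + ∑ i ∈ Finset.Icc 1 (m * ℓ / (ℓ + 1)),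
          (-1) ^ (i + 1) * (m.choose i : ℤ)
            * ((m + m * ℓ - i * (ℓ + 1) - 1).choose (m * ℓ - i * (ℓ + 1)) : ℤ) :=
  stmt_7_general m ℓ
end

section
/- For natural numbers m ≥ 1 and ℓ ≥ 1: ∑_{i=0}^{⌊(mℓ−1)/(ℓ+1)⌋} (−1)^i · C(m, i) · C(m + mℓ − i(ℓ+1) − 2, mℓ − i(ℓ+1) − 1) = m, as an identity in ℤ. -/
/-!
The sum is the inclusion–exclusion expansion of the coefficient of `X ^ (mℓ - 1)` in
`(1 + X + ⋯ + X ^ ℓ) ^ m = (1 - X ^ (ℓ + 1)) ^ m (1 - X) ^ (-m)`. That polynomial is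
palindromic of degree `mℓ`, so this coefficient equals the coefficient of `X`, which is `m`.
-/

open Finset Polynomial

section Reflect

variable {R : Type*} [Semiring R]

theorem Polynomial.reflect_pow {f : R[X]} {N : ℕ} (hf : f.natDegree ≤ N) (k : ℕ) :
    (f ^ k).reflect (N * k) = f.reflect N ^ k := by
  induction k with
  | zero => simp
  | succ k ih =>
    have hdeg : (f ^ k).natDegree ≤ N * k :=
      natDegree_pow_le.trans (by rw [mul_comm N]; exact Nat.mul_le_mul_left k hf)
    rw [pow_succ, Nat.mul_succ, reflect_mul _ _ hdeg hf, ih, pow_succ]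

theorem coeff_geom_sum_X (L i : ℕ) :
    (∑ k ∈ range L, (X : R[X]) ^ k).coeff i = if i < L then 1 else 0 := by
  simp [coeff_X_pow]

theorem natDegree_geom_sum_X_le (L : ℕ) :
    (∑ k ∈ range (L + 1), (X : R[X]) ^ k).natDegree ≤ L := by
  rw [natDegree_le_iff_coeff_eq_zero]
  intro i hi
  rw [coeff_geom_sum_X, if_neg (by omega)]

theorem reflect_geom_sum_X (L : ℕ) :
    (∑ k ∈ range (L + 1), (X : R[X]) ^ k).reflect L =
      ∑ k ∈ range (L + 1), (X : R[X]) ^ k := by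
  ext i
  rw [coeff_reflect, coeff_geom_sum_X, coeff_geom_sum_X, ← revAtFun_eq, revAtFun]
  split_ifs <;> first | rfl | omega

theorem coeff_geom_sum_X_pow_sub (L m : ℕ) {j : ℕ} (hj : j ≤ m * L) :
    ((∑ k ∈ range (L + 1), (X : R[X]) ^ k) ^ m).coeff (m * L - j) =
      ((∑ k ∈ range (L + 1), (X : R[X]) ^ k) ^ m).coeff j := by
  conv_lhs =>
    rw [← reflect_geom_sum_X L, ← reflect_pow (natDegree_geom_sum_X_le L), coeff_reflect]
  rw [revAt_le (by rw [mul_comm]; omega), mul_comm, Nat.sub_sub_self hj]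

end Reflect

section InclusionExclusion

variable {R : Type*} [CommRing R]

theorem coe_geom_sum_X_pow_eq (L m : ℕ) :
    (((∑ k ∈ range L, (X : R[X]) ^ k) ^ m : R[X]) : PowerSeries R) =
      (1 - PowerSeries.X ^ L) ^ m * (PowerSeries.invOneSubPow R m).val := by
  have hgeom : ((∑ k ∈ range L, (X : R[X]) ^ k : R[X]) : PowerSeries R) * (1 - PowerSeries.X) =
      1 - PowerSeries.X ^ L := by
    rw [← coeToPowerSeries.ringHom_apply, map_sum]
    simpa using geom_sum_mul_neg (PowerSeries.X : PowerSeries R) L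
  rw [← hgeom, mul_pow, mul_assoc, ← PowerSeries.invOneSubPow_inv_eq_one_sub_pow,
    (PowerSeries.invOneSubPow R m).inv_val, mul_one, Polynomial.coe_pow]

theorem coeff_one_sub_X_pow_pow_mul (L m n : ℕ) (g : PowerSeries R) :
    PowerSeries.coeff n ((1 - PowerSeries.X ^ L) ^ m * g) =
      ∑ i ∈ range (m + 1),
        (-1) ^ i * (m.choose i : R) *
          if i * L ≤ n then PowerSeries.coeff (n - i * L) g else 0 := by
  rw [sub_eq_neg_add, add_pow, sum_mul, map_sum]
  refine sum_congr rfl fun i _ => ?_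
  rw [one_pow, mul_one, neg_pow, ← pow_mul, mul_comm L i]
  have hterm : (-1) ^ i * PowerSeries.X ^ (i * L) * (m.choose i : PowerSeries R) * g =
      PowerSeries.C ((-1) ^ i * (m.choose i : R)) * (PowerSeries.X ^ (i * L) * g) := by
    simp only [map_mul, map_pow, map_neg, map_one, map_natCast]
    ring
  rw [hterm, PowerSeries.coeff_C_mul, PowerSeries.coeff_X_pow_mul']

theorem sum_range_choose_mul_ite_le_eq_sum_range_div (L m n : ℕ) (hL : 0 < L) (a : ℕ → R) :
    ∑ i ∈ range (m + 1),
        (-1) ^ i * (m.choose i : R) * (if i * L ≤ n then a (n - i * L) else 0) =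
      ∑ i ∈ range (n / L + 1), (-1) ^ i * (m.choose i : R) * a (n - i * L) := by
  set F : ℕ → R := fun i =>
    (-1) ^ i * (m.choose i : R) * (if i * L ≤ n then a (n - i * L) else 0)
  have hleft : ∑ i ∈ range (m + 1), F i = ∑ i ∈ range (m + n / L + 1), F i := by
    refine sum_subset (range_subset_range.mpr (by simp)) fun i _ hi => ?_
    simp [F, Nat.choose_eq_zero_of_lt (show m < i by simpa using hi)]
  have hright : ∑ i ∈ range (n / L + 1), F i = ∑ i ∈ range (m + n / L + 1), F i := by
    refine sum_subset (range_subset_range.mpr (by simp)) fun i _ hi => ?_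
    have : ¬ i * L ≤ n := by rw [← Nat.le_div_iff_mul_le hL]; simpa using hi
    simp [F, this]
  rw [hleft, ← hright]
  refine sum_congr rfl fun i hi => ?_
  simp only [F, if_pos ((Nat.le_div_iff_mul_le hL).mp (by simpa [Nat.lt_succ_iff] using hi))]

/-- Inclusion–exclusion for compositions of `n` into `m` parts, each smaller than `L`. -/
theorem coeff_geom_sum_X_pow (L m n : ℕ) (hL : 0 < L) (hm : 0 < m) :
    ((∑ k ∈ range L, (X : R[X]) ^ k) ^ m).coeff n =
      ∑ i ∈ range (n / L + 1),
        (-1) ^ i * (m.choose i : R) * ((m - 1 + (n - i * L)).choose (m - 1) : R) := by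
  rw [← coeff_coe, coe_geom_sum_X_pow_eq, coeff_one_sub_X_pow_pow_mul,
    PowerSeries.invOneSubPow_val_eq_mk_sub_one_add_choose_of_pos R m hm]
  simp only [PowerSeries.coeff_mk]
  exact sum_range_choose_mul_ite_le_eq_sum_range_div L m n hL
    fun k => ((m - 1 + k).choose (m - 1) : R)

theorem coeff_one_geom_sum_X_pow (L m : ℕ) (hL : 0 < L) (hm : 0 < m) :
    ((∑ k ∈ range (L + 1), (X : R[X]) ^ k) ^ m).coeff 1 = m := by
  rw [coeff_geom_sum_X_pow _ _ _ (Nat.succ_pos L) hm, Nat.div_eq_of_lt (by omega), zero_add,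
    sum_range_one]
  simp [Nat.sub_add_cancel hm, Nat.choose_symm hm]

end InclusionExclusion

/-- The inclusion–exclusion sum at `n = mℓ - 1` equals `m`. -/
theorem stmt_8 (m ℓ : ℕ) (hm : 1 ≤ m) (hℓ : 1 ≤ ℓ) :
    ∑ i ∈ Finset.range ((m * ℓ - 1) / (ℓ + 1) + 1),
        (-1 : ℤ) ^ i * (m.choose i : ℤ)
          * ((m + m * ℓ - i * (ℓ + 1) - 2).choose (m * ℓ - i * (ℓ + 1) - 1) : ℤ)
      = m := by
  have hmℓ : 1 ≤ m * ℓ := Nat.mul_le_mul hm hℓ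
  calc _ = ∑ i ∈ range ((m * ℓ - 1) / (ℓ + 1) + 1), (-1) ^ i * (m.choose i : ℤ) *
          ((m - 1 + (m * ℓ - 1 - i * (ℓ + 1))).choose (m - 1) : ℤ) := by
        refine sum_congr rfl fun i hi => ?_
        have hi : i * (ℓ + 1) ≤ m * ℓ - 1 :=
          (Nat.le_div_iff_mul_le (Nat.succ_pos ℓ)).mp (Nat.lt_succ_iff.mp (mem_range.mp hi))
        generalize m * ℓ = N at hi hmℓ ⊢
        generalize i * (ℓ + 1) = j at hi ⊢
        rw [show m + N - j - 2 = m - 1 + (N - 1 - j) by omega,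
          show N - j - 1 = N - 1 - j by omega, Nat.choose_symm_add]
    _ = ((∑ k ∈ range (ℓ + 1), (X : ℤ[X]) ^ k) ^ m).coeff (m * ℓ - 1) :=
        (coeff_geom_sum_X_pow _ _ _ (Nat.succ_pos ℓ) hm).symm
    _ = m := by rw [coeff_geom_sum_X_pow_sub ℓ m hmℓ, coeff_one_geom_sum_X_pow ℓ m hℓ hm]
end

section
/- For m ≥ 2 and ℓ ≥ 2, the number of pairs of functions (f,g) : Fin m → ℕ × ℕ with ∑f = ℓ, ∑g = 2, and f i + g i ≤ ℓ for all i equals C(m+1,2)·C(m+ℓ−1,ℓ) − m(2m−1). -/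
open Finset

lemma stmt15_card_sum_filter (m n : ℕ) :
    ((Fintype.piFinset fun _ : Fin m => Finset.range (n + 1)).filter
      (fun f => ∑ i, f i = n)).card = (m + n - 1).choose n := by
  classical
  have hset : (Fintype.piFinset fun _ : Fin m => Finset.range (n + 1)).filter
      (fun f => ∑ i, f i = n) = Finset.piAntidiag Finset.univ n := by
    ext f
    simp only [mem_filter, Fintype.mem_piFinset, mem_range, mem_piAntidiag]
    constructor
    · rintro ⟨_, h2⟩
      exact ⟨h2, fun i _ => mem_univ i⟩
    · rintro ⟨h1, -⟩
      refine ⟨fun i => ?_, h1⟩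
      have h2 := Finset.single_le_sum (f := f) (fun i _ => Nat.zero_le _) (mem_univ i)
      have h1' : ∑ x : Fin m, f x = n := h1
      omega
  rw [hset, ← Finset.map_sym_eq_piAntidiag, Finset.card_map, Finset.sym_univ,
    Finset.card_univ, Sym.card_sym_eq_choose, Fintype.card_fin]
lemma stmt15_sum_delta {m : ℕ} (i : Fin m) (a : ℕ) :
    ∑ k, (if k = i then a else 0) = a := by simp

lemma stmt15_sum_two {m : ℕ} {i j : Fin m} (h : j ≠ i) (a b : ℕ) :
    ∑ k, (if k = i then a else if k = j then b else 0) = a + b := by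
  have he : ∀ k : Fin m, (if k = i then a else if k = j then b else 0)
      = (if k = i then a else 0) + (if k = j then b else 0) := by
    intro k
    by_cases h1 : k = i
    · subst h1; simp [Ne.symm h]
    · simp [h1]
  rw [Finset.sum_congr rfl fun k _ => he k, Finset.sum_add_distrib]
  simp

lemma stmt15_exists_single {m : ℕ} {s : Finset (Fin m)} {h : Fin m → ℕ}
    (hs : ∑ k ∈ s, h k = 1) :
    ∃ j ∈ s, h j = 1 ∧ ∀ k ∈ s, k ≠ j → h k = 0 := by
  obtain ⟨j, hj, hne⟩ : ∃ j ∈ s, h j ≠ 0 := by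
    by_contra hc
    push_neg at hc
    rw [Finset.sum_eq_zero hc] at hs
    omega
  have hle : h j ≤ 1 := hs ▸ Finset.single_le_sum (fun _ _ => Nat.zero_le _) hj
  have hj1 : h j = 1 := by omega
  refine ⟨j, hj, hj1, fun k hk hkj => ?_⟩
  have hsum := Finset.add_sum_erase s h hj
  have h0 : ∑ k ∈ s.erase j, h k = 0 := by omega
  exact Finset.sum_eq_zero_iff.mp h0 k (Finset.mem_erase.mpr ⟨hkj, hk⟩)


open Finset

def stmt15_psi {m : ℕ} (ℓ : ℕ) (i : Fin m) : Option (Fin m × Bool) → (Fin m → ℕ) × (Fin m → ℕ)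
  | none => (fun k => if k = i then ℓ else 0, fun k => if k = i then 2 else 0)
  | some (j, false) => (fun k => if k = i then ℓ else 0,
      fun k => if k = i then 1 else if k = j then 1 else 0)
  | some (j, true) => (fun k => if k = i then ℓ - 1 else if k = j then 1 else 0,
      fun k => if k = i then 2 else 0)

lemma stmt15_idx_card {m : ℕ} (i : Fin m) :
    (insert none ((((Finset.univ : Finset (Fin m)).erase i) ×ˢ
      (Finset.univ : Finset Bool)).image some)).card = 2 * m - 1 := by
  have hm1 : 1 ≤ m := i.pos
  rw [Finset.card_insert_of_notMem (by simp),
    Finset.card_image_of_injective _ (Option.some_injective _),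
    Finset.card_product, Finset.card_erase_of_mem (Finset.mem_univ i)]
  simp only [Finset.card_univ, Fintype.card_fin, Fintype.card_bool]
  omega

lemma stmt15_inj {m ℓ : ℕ} (hℓ : 2 ≤ ℓ) (i : Fin m) :
    Set.InjOn (stmt15_psi ℓ i) ↑(insert none ((((Finset.univ : Finset (Fin m)).erase i) ×ˢ
      (Finset.univ : Finset Bool)).image some)) := by
  have key : ∀ t ∈ (insert none ((((Finset.univ : Finset (Fin m)).erase i) ×ˢ
      (Finset.univ : Finset Bool)).image some) : Finset _),
      t = none ∨ ∃ j : Fin m, ∃ b : Bool, j ≠ i ∧ t = some (j, b) := by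
    intro t ht
    simp only [mem_insert, mem_image, mem_product, mem_erase, mem_univ, and_true,
      true_and, Prod.exists] at ht
    rcases ht with rfl | ⟨j, b, hji, rfl⟩
    · exact Or.inl rfl
    · exact Or.inr ⟨j, b, hji, rfl⟩
  intro t1 h1 t2 h2 heq
  rcases key t1 h1 with rfl | ⟨j1, b1, hj1, rfl⟩ <;>
    rcases key t2 h2 with rfl | ⟨j2, b2, hj2, rfl⟩
  · rfl
  · exfalso
    cases b2
    · have := congr_fun (congrArg Prod.snd heq) i
      simp [stmt15_psi] at this
    · have := congr_fun (congrArg Prod.fst heq) i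
      simp [stmt15_psi] at this
      omega
  · exfalso
    cases b1
    · have := congr_fun (congrArg Prod.snd heq) i
      simp [stmt15_psi] at this
    · have := congr_fun (congrArg Prod.fst heq) i
      simp [stmt15_psi] at this
      omega
  · cases b1 <;> cases b2
    · have := congr_fun (congrArg Prod.snd heq) j1
      simp [stmt15_psi, hj1] at this
      by_cases hj : j1 = j2
      · subst hj; rfl
      · simp [hj] at this
    · exfalso
      have := congr_fun (congrArg Prod.snd heq) i
      simp [stmt15_psi] at this
    · exfalso
      have := congr_fun (congrArg Prod.snd heq) i
      simp [stmt15_psi] at this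
    · have := congr_fun (congrArg Prod.fst heq) j1
      simp [stmt15_psi, hj1] at this
      by_cases hj : j1 = j2
      · subst hj; rfl
      · simp [hj] at this
lemma stmt15_Bi {m : ℕ} (ℓ : ℕ) (hℓ : 2 ≤ ℓ) (i : Fin m) :
    (((Fintype.piFinset fun _ : Fin m => Finset.range (ℓ + 1)) ×ˢ
        (Fintype.piFinset fun _ : Fin m => Finset.range 3)).filter
      (fun p => ((∑ k, p.1 k = ℓ) ∧ (∑ k, p.2 k = 2)) ∧ ℓ < p.1 i + p.2 i))
      = (insert none ((((Finset.univ : Finset (Fin m)).erase i) ×ˢ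
          (Finset.univ : Finset Bool)).image some)).image (stmt15_psi ℓ i) := by
  classical
  ext p
  simp only [mem_filter, mem_product, Fintype.mem_piFinset, mem_range, mem_image,
    mem_insert, mem_erase, mem_univ, and_true, true_and, Prod.exists]
  constructor
  · rintro ⟨⟨hf, hg⟩, ⟨hsf, hsg⟩, hlt⟩
    have hfi : p.1 i ≤ ℓ := by have := hf i; omega
    have hgi : p.2 i ≤ 2 := by have := hg i; omega
    have hsum_f := Finset.add_sum_erase Finset.univ p.1 (Finset.mem_univ i)
    have hsum_g := Finset.add_sum_erase Finset.univ p.2 (Finset.mem_univ i)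
    have hsf' : p.1 i + ∑ k ∈ Finset.univ.erase i, p.1 k = ℓ := by
      rw [hsum_f]; exact hsf
    have hsg' : p.2 i + ∑ k ∈ Finset.univ.erase i, p.2 k = 2 := by
      rw [hsum_g]; exact hsg
    rcases (by omega : p.2 i = 1 ∨ p.2 i = 2) with hg1 | hg2
    · -- g i = 1, f i = ℓ
      have hfieq : p.1 i = ℓ := by omega
      have hrf : ∑ k ∈ Finset.univ.erase i, p.1 k = 0 := by omega
      have hrg : ∑ k ∈ Finset.univ.erase i, p.2 k = 1 := by omega
      obtain ⟨j, hj, hj1, hjz⟩ := stmt15_exists_single hrg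
      have hji : j ≠ i := (Finset.mem_erase.mp hj).1
      refine ⟨some (j, false), Or.inr ⟨j, false, ⟨hji, rfl⟩⟩, ?_⟩
      have hfz := Finset.sum_eq_zero_iff.mp hrf
      refine Prod.ext (funext fun k => ?_) (funext fun k => ?_) <;>
        by_cases hk : k = i
      · subst hk; simp [stmt15_psi, hfieq]
      · simp only [stmt15_psi, if_neg hk]
        exact (hfz k (Finset.mem_erase.mpr ⟨hk, Finset.mem_univ k⟩)).symm
      · subst hk; simp [stmt15_psi, hg1]
      · simp only [stmt15_psi, if_neg hk]
        by_cases hkj : k = j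
        · subst hkj; simp [hj1]
        · rw [if_neg hkj]
          exact (hjz k (Finset.mem_erase.mpr ⟨hk, Finset.mem_univ k⟩) hkj).symm
    · -- g i = 2
      have hrg : ∑ k ∈ Finset.univ.erase i, p.2 k = 0 := by omega
      have hgz := Finset.sum_eq_zero_iff.mp hrg
      have hfi' : ℓ - 1 ≤ p.1 i := by omega
      rcases (by omega : p.1 i = ℓ ∨ p.1 i = ℓ - 1) with hfℓ | hfℓ
      · have hrf : ∑ k ∈ Finset.univ.erase i, p.1 k = 0 := by omega
        have hfz := Finset.sum_eq_zero_iff.mp hrf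
        refine ⟨none, Or.inl rfl, ?_⟩
        refine Prod.ext (funext fun k => ?_) (funext fun k => ?_) <;>
          by_cases hk : k = i
        · subst hk; simp [stmt15_psi, hfℓ]
        · simp only [stmt15_psi, if_neg hk]
          exact (hfz k (Finset.mem_erase.mpr ⟨hk, Finset.mem_univ k⟩)).symm
        · subst hk; simp [stmt15_psi, hg2]
        · simp only [stmt15_psi, if_neg hk]
          exact (hgz k (Finset.mem_erase.mpr ⟨hk, Finset.mem_univ k⟩)).symm
      · have hrf : ∑ k ∈ Finset.univ.erase i, p.1 k = 1 := by omega
        obtain ⟨j, hj, hj1, hjz⟩ := stmt15_exists_single hrf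
        have hji : j ≠ i := (Finset.mem_erase.mp hj).1
        refine ⟨some (j, true), Or.inr ⟨j, true, ⟨hji, rfl⟩⟩, ?_⟩
        refine Prod.ext (funext fun k => ?_) (funext fun k => ?_) <;>
          by_cases hk : k = i
        · subst hk; simp [stmt15_psi, hfℓ]
        · simp only [stmt15_psi, if_neg hk]
          by_cases hkj : k = j
          · subst hkj; simp [hj1]
          · rw [if_neg hkj]
            exact (hjz k (Finset.mem_erase.mpr ⟨hk, Finset.mem_univ k⟩) hkj).symm
        · subst hk; simp [stmt15_psi, hg2]
        · simp only [stmt15_psi, if_neg hk]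
          exact (hgz k (Finset.mem_erase.mpr ⟨hk, Finset.mem_univ k⟩)).symm
  · rintro ⟨t, ht, rfl⟩
    rcases ht with rfl | ⟨j, b, ⟨hji, rfl⟩⟩
    · refine ⟨⟨fun k => ?_, fun k => ?_⟩, ⟨?_, ?_⟩, ?_⟩
      · dsimp [stmt15_psi]; split_ifs <;> omega
      · dsimp [stmt15_psi]; split_ifs <;> omega
      · exact stmt15_sum_delta i ℓ
      · exact stmt15_sum_delta i 2
      · simp [stmt15_psi]
    · cases b
      · refine ⟨⟨fun k => ?_, fun k => ?_⟩, ⟨?_, ?_⟩, ?_⟩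
        · dsimp [stmt15_psi]; split_ifs <;> omega
        · dsimp [stmt15_psi]; split_ifs <;> omega
        · exact stmt15_sum_delta i ℓ
        · exact stmt15_sum_two hji 1 1
        · simp [stmt15_psi]
      · refine ⟨⟨fun k => ?_, fun k => ?_⟩, ⟨?_, ?_⟩, ?_⟩
        · dsimp [stmt15_psi]; split_ifs <;> omega
        · dsimp [stmt15_psi]; split_ifs <;> omega
        · dsimp only [stmt15_psi]
          rw [stmt15_sum_two hji (ℓ - 1) 1]; omega
        · exact stmt15_sum_delta i 2
        · simp [stmt15_psi]; omega

/-- The case `n₁ = ℓ`, `n₂ = 2`: the count is `C(m+1,2)·C(m+ℓ-1,ℓ) - m(2m-1)`. -/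
theorem stmt_15 (m ℓ : ℕ) (hm : 2 ≤ m) (hℓ : 2 ≤ ℓ) :
    ((((Fintype.piFinset fun _ : Fin m => Finset.range (ℓ + 1)) ×ˢ
        (Fintype.piFinset fun _ : Fin m => Finset.range 3)).filter
      (fun p => (∑ i, p.1 i = ℓ) ∧ (∑ i, p.2 i = 2) ∧
        ∀ i, p.1 i + p.2 i ≤ ℓ)).card : ℤ)
      = ((m + 1).choose 2 : ℤ) * ((m + ℓ - 1).choose ℓ : ℤ)
        - m * (2 * m - 1) := by
  classical
  set U : Finset ((Fin m → ℕ) × (Fin m → ℕ)) :=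
    (Fintype.piFinset fun _ : Fin m => Finset.range (ℓ + 1)) ×ˢ
      (Fintype.piFinset fun _ : Fin m => Finset.range 3) with hU
  set T : Finset ((Fin m → ℕ) × (Fin m → ℕ)) :=
    U.filter (fun p => (∑ i, p.1 i = ℓ) ∧ (∑ i, p.2 i = 2)) with hT
  -- split the filter
  have hsplit : U.filter (fun p => (∑ i, p.1 i = ℓ) ∧ (∑ i, p.2 i = 2) ∧
      ∀ i, p.1 i + p.2 i ≤ ℓ) = T.filter (fun p => ∀ i, p.1 i + p.2 i ≤ ℓ) := by
    rw [hT, Finset.filter_filter]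
    exact Finset.filter_congr fun p _ => by tauto
  -- card of T
  have hTcard : T.card = (m + ℓ - 1).choose ℓ * (m + 1).choose 2 := by
    have hprod : T =
        ((Fintype.piFinset fun _ : Fin m => Finset.range (ℓ + 1)).filter
          (fun f => ∑ i, f i = ℓ)) ×ˢ
        ((Fintype.piFinset fun _ : Fin m => Finset.range (2 + 1)).filter
          (fun g => ∑ i, g i = 2)) := by
      ext p
      simp only [hT, hU, Finset.mem_filter, Finset.mem_product]
      tauto
    rw [hprod, Finset.card_product, stmt15_card_sum_filter m ℓ,
      stmt15_card_sum_filter m 2]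
    norm_num
  -- the bad set
  have hgoodbad := Finset.card_filter_add_card_filter_not
    (s := T) (p := fun p => ∀ i, p.1 i + p.2 i ≤ ℓ)
  set B : Finset ((Fin m → ℕ) × (Fin m → ℕ)) :=
    T.filter (fun p => ¬ ∀ i, p.1 i + p.2 i ≤ ℓ) with hB
  have hBunion : B = Finset.univ.biUnion (fun i : Fin m =>
      U.filter (fun p => ((∑ k, p.1 k = ℓ) ∧ (∑ k, p.2 k = 2)) ∧ ℓ < p.1 i + p.2 i)) := by
    ext p
    simp only [hB, hT, Finset.mem_filter, Finset.mem_biUnion, Finset.mem_univ, true_and,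
      not_forall, not_le]
    tauto
  have hdisj : ∀ i ∈ (Finset.univ : Finset (Fin m)), ∀ j ∈ (Finset.univ : Finset (Fin m)),
      i ≠ j → Disjoint
        (U.filter (fun p => ((∑ k, p.1 k = ℓ) ∧ (∑ k, p.2 k = 2)) ∧ ℓ < p.1 i + p.2 i))
        (U.filter (fun p => ((∑ k, p.1 k = ℓ) ∧ (∑ k, p.2 k = 2)) ∧ ℓ < p.1 j + p.2 j)) := by
    intro i _ j _ hij
    rw [Finset.disjoint_left]
    intro p hpi hpj
    rw [Finset.mem_filter] at hpi hpj
    obtain ⟨-, ⟨hsf, hsg⟩, hi⟩ := hpi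
    obtain ⟨-, -, hj⟩ := hpj
    have h1 : p.1 i + p.1 j ≤ ℓ := by
      have hs : ∑ k ∈ ({i, j} : Finset (Fin m)), p.1 k ≤ ∑ k, p.1 k :=
        Finset.sum_le_sum_of_subset (Finset.subset_univ _)
      rwa [Finset.sum_pair hij, hsf] at hs
    have h2 : p.2 i + p.2 j ≤ 2 := by
      have hs : ∑ k ∈ ({i, j} : Finset (Fin m)), p.2 k ≤ ∑ k, p.2 k :=
        Finset.sum_le_sum_of_subset (Finset.subset_univ _)
      rwa [Finset.sum_pair hij, hsg] at hs
    omega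
  have hBcard : B.card = m * (2 * m - 1) := by
    rw [hBunion, Finset.card_biUnion hdisj]
    have hone : ∀ i : Fin m,
        (U.filter (fun p => ((∑ k, p.1 k = ℓ) ∧ (∑ k, p.2 k = 2)) ∧ ℓ < p.1 i + p.2 i)).card
          = 2 * m - 1 := by
      intro i
      rw [hU, stmt15_Bi ℓ hℓ i, Finset.card_image_of_injOn (stmt15_inj hℓ i),
        stmt15_idx_card i]
    rw [Finset.sum_congr rfl fun i _ => hone i, Finset.sum_const, Finset.card_univ,
      Fintype.card_fin, smul_eq_mul]
  rw [hsplit]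
  have hcast : (((T.filter (fun p => ∀ i, p.1 i + p.2 i ≤ ℓ)).card : ℤ))
      = (T.card : ℤ) - (B.card : ℤ) := by omega
  rw [hcast, hTcard, hBcard]
  have h2m : (1 : ℕ) ≤ 2 * m := by omega
  push_cast [Nat.cast_sub h2m]
  ring
end
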